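/- arXiv:2509.03028 — 3 statements merged into one kernel-verified Lean document; each statement's English description precedes it below -/
import Mathlib

section
/- Let l ∈ ℕ and let m : ℝ × (0,∞) → ℝ be measurable. Suppose ⟨z⟩^{l+1} m ∈ L²(ℝ × (0,∞)), where ⟨z⟩ = √(z²+1). Define F(x,z) = ∫_z^∞ m(x,η) dη. Then ⟨z⟩^l F ∈ L²(ℝ × (0,∞)) and ‖⟨z⟩^l F‖_{L²} ≤ C · ‖⟨z⟩^{l+1} m‖_{L²} for a constant C depending only on l. -/
open MeasureTheory

open Set

lemma tail1 {z : ℝ} (hz : 1 ≤ z) :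
    ∫⁻ η in Ioi z, ENNReal.ofReal ((η^2+1) ^ (-(3:ℝ)/4)) ≤ ENNReal.ofReal (2 * z ^ (-(1:ℝ)/2)) := by
  have hz0 : (0:ℝ) < z := lt_of_lt_of_le one_pos hz
  have step1 : ∫⁻ η in Ioi z, ENNReal.ofReal ((η^2+1) ^ (-(3:ℝ)/4))
      ≤ ∫⁻ η in Ioi z, ENNReal.ofReal (η ^ (-(3:ℝ)/2)) := by
    refine setLIntegral_mono (by measurability) fun η hη => ?_
    have hη0 : (0:ℝ) < η := hz0.trans hη
    refine ENNReal.ofReal_le_ofReal ?_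
    have h1 : (η^2+1) ^ (-(3:ℝ)/4) ≤ (η^2) ^ (-(3:ℝ)/4) :=
      Real.rpow_le_rpow_of_nonpos (by positivity) (by linarith) (by norm_num)
    have h2 : (η^2 : ℝ) ^ (-(3:ℝ)/4) = η ^ (-(3:ℝ)/2) := by
      rw [← Real.rpow_natCast η 2, ← Real.rpow_mul hη0.le]
      norm_num
    linarith [h1, h2.le]
  refine step1.trans ?_
  have hint : IntegrableOn (fun η : ℝ => η ^ (-(3:ℝ)/2)) (Ioi z) :=
    integrableOn_Ioi_rpow_of_lt (by norm_num) hz0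
  have hnn : (0:ℝ→ℝ) ≤ᵐ[volume.restrict (Ioi z)] fun η : ℝ => η ^ (-(3:ℝ)/2) := by
    filter_upwards [ae_restrict_mem measurableSet_Ioi] with η hη
    exact Real.rpow_nonneg (le_of_lt (hz0.trans hη)) _
  rw [← ofReal_integral_eq_lintegral_ofReal hint hnn]
  refine ENNReal.ofReal_le_ofReal ?_
  rw [integral_Ioi_rpow_of_lt (by norm_num) hz0]
  have he : (-(3:ℝ)/2 + 1) = -(1:ℝ)/2 := by norm_num
  rw [he]
  ring_nf
  exact le_rfl


-- from b^4 ≤ c^4, b,c ≥ 0 conclude b ≤ c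
lemma pow4le {b c : ℝ} (hb : 0 ≤ b) (hc : 0 ≤ c) (h : b^(4:ℕ) ≤ c^(4:ℕ)) : b ≤ c :=
  (pow_le_pow_iff_left₀ hb hc (by norm_num)).1 h

lemma rpow4 {x : ℝ} (hx : 0 ≤ x) : (x ^ ((1:ℝ)/4)) ^ (4:ℕ) = x := by
  rw [← Real.rpow_natCast (x ^ ((1:ℝ)/4)) 4, ← Real.rpow_mul hx]
  norm_num

lemma tailA {z : ℝ} (hz : 0 ≤ z) :
    ∫⁻ η in Ioi z, ENNReal.ofReal ((η^2+1) ^ (-(3:ℝ)/4))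
      ≤ ENNReal.ofReal (4 * (z^2+1) ^ (-(1:ℝ)/4)) := by
  have hzq : (0:ℝ) < z^2+1 := by positivity
  have hb : (0:ℝ) < (z^2+1) ^ ((1:ℝ)/4) := Real.rpow_pos_of_pos hzq _
  have hneg : ((z^2+1) : ℝ) ^ (-(1:ℝ)/4) = ((z^2+1) ^ ((1:ℝ)/4))⁻¹ := by
    rw [show (-(1:ℝ)/4) = -((1:ℝ)/4) by norm_num, Real.rpow_neg hzq.le]
  rcases le_or_gt 1 z with h1 | h1
  · refine (tail1 h1).trans (ENNReal.ofReal_le_ofReal ?_)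
    have hz0 : (0:ℝ) < z := lt_of_lt_of_le one_pos h1
    have ha : (0:ℝ) < z ^ ((1:ℝ)/2) := Real.rpow_pos_of_pos hz0 _
    have haneg : z ^ (-(1:ℝ)/2) = (z ^ ((1:ℝ)/2))⁻¹ := by
      rw [show (-(1:ℝ)/2) = -((1:ℝ)/2) by norm_num, Real.rpow_neg hz0.le]
    rw [haneg, hneg]
    have hba : (z^2+1) ^ ((1:ℝ)/4) ≤ 2 * z ^ ((1:ℝ)/2) := by
      refine pow4le hb.le (by positivity) ?_
      rw [rpow4 hzq.le, mul_pow]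
      have : (z ^ ((1:ℝ)/2)) ^ (4:ℕ) = z^2 := by
        rw [← Real.rpow_natCast (z ^ ((1:ℝ)/2)) 4, ← Real.rpow_mul hz0.le]
        norm_num
      rw [this]; nlinarith
    rw [← div_eq_mul_inv, ← div_eq_mul_inv, div_le_div_iff₀ ha hb]
    nlinarith
  · -- z < 1 case
    have hsub : (∫⁻ η in Ioi z, ENNReal.ofReal ((η^2+1) ^ (-(3:ℝ)/4)))
        ≤ ∫⁻ η in Ioi (0:ℝ), ENNReal.ofReal ((η^2+1) ^ (-(3:ℝ)/4)) :=
      lintegral_mono_set (fun x hx => lt_of_le_of_lt hz hx)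
    have hsplit : (∫⁻ η in Ioi (0:ℝ), ENNReal.ofReal ((η^2+1) ^ (-(3:ℝ)/4)))
        ≤ (∫⁻ η in Ioc (0:ℝ) 1, ENNReal.ofReal ((η^2+1) ^ (-(3:ℝ)/4)))
          + ∫⁻ η in Ioi (1:ℝ), ENNReal.ofReal ((η^2+1) ^ (-(3:ℝ)/4)) := by
      rw [← Ioc_union_Ioi_eq_Ioi (zero_le_one : (0:ℝ) ≤ 1)]
      exact lintegral_union_le _ _ _
    have h2 : (∫⁻ η in Ioc (0:ℝ) 1, ENNReal.ofReal ((η^2+1) ^ (-(3:ℝ)/4))) ≤ 1 := by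
      have hle : (∫⁻ η in Ioc (0:ℝ) 1, ENNReal.ofReal ((η^2+1) ^ (-(3:ℝ)/4)))
          ≤ ∫⁻ _η in Ioc (0:ℝ) 1, (1:ENNReal) := by
        refine setLIntegral_mono measurable_const fun η _ => ?_
        rw [show (1:ENNReal) = ENNReal.ofReal 1 by simp]
        exact ENNReal.ofReal_le_ofReal
          (Real.rpow_le_one_of_one_le_of_nonpos (by nlinarith) (by norm_num))
      refine hle.trans ?_
      rw [setLIntegral_const]
      simp [Real.volume_Ioc]
    have h3 : (∫⁻ η in Ioi (1:ℝ), ENNReal.ofReal ((η^2+1) ^ (-(3:ℝ)/4)))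
        ≤ ENNReal.ofReal 2 := by
      refine (tail1 le_rfl).trans (le_of_eq ?_)
      norm_num
    refine hsub.trans (hsplit.trans ?_)
    have h13 : (1:ENNReal) + ENNReal.ofReal 2 = ENNReal.ofReal 3 := by
      rw [show (1:ENNReal) = ENNReal.ofReal 1 by simp, ← ENNReal.ofReal_add] <;> norm_num
    refine (add_le_add h2 h3).trans (h13.le.trans (ENNReal.ofReal_le_ofReal ?_))
    rw [hneg]
    have hble : (z^2+1) ^ ((1:ℝ)/4) ≤ 4/3 := by
      refine pow4le hb.le (by norm_num) ?_
      rw [rpow4 hzq.le]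
      nlinarith
    rw [← div_eq_mul_inv, le_div_iff₀ hb]
    nlinarith

lemma contrpow (c : ℝ) : Continuous (fun z : ℝ => (z^2+1) ^ c) := by
  have hb : Continuous (fun z : ℝ => z^2+1) := by continuity
  exact hb.rpow_const (fun x => Or.inl (by positivity))

lemma frontC {η : ℝ} (hη : 0 < η) :
    ∫⁻ z in Ioo 0 η, ENNReal.ofReal ((z^2+1) ^ (-(1:ℝ)/4))
      ≤ ENNReal.ofReal (2 * (η^2+1) ^ ((1:ℝ)/4)) := by
  set φ : ℝ → ℝ := fun z => (z^2+1) ^ (-(1:ℝ)/4) with hφ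
  set D : ℝ → ℝ := fun z => φ z + z * ((2*z) * (-(1:ℝ)/4) * (z^2+1) ^ (-(1:ℝ)/4 - 1)) with hD
  have hg : ∀ z : ℝ, HasDerivAt (fun t => t * (t^2+1) ^ (-(1:ℝ)/4)) (D z) z := by
    intro z
    have hq : HasDerivAt (fun t : ℝ => t^2+1) (2*z) z := by
      simpa using ((hasDerivAt_pow 2 z).add_const 1)
    have hr : HasDerivAt (fun t : ℝ => (t^2+1) ^ (-(1:ℝ)/4))
        ((2*z) * (-(1:ℝ)/4) * (z^2+1) ^ (-(1:ℝ)/4 - 1)) z :=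
      hq.rpow_const (Or.inl (by positivity))
    simpa [hD, hφ, Pi.mul_def] using (hasDerivAt_id z).mul hr
  have hDcont : Continuous D := by
    have h1 := contrpow (-(1:ℝ)/4)
    have h2 := contrpow (-(1:ℝ)/4 - 1)
    fun_prop
  have key : ∀ z : ℝ, φ z ≤ 2 * D z := by
    intro z
    have hzq : (0:ℝ) < z^2+1 := by positivity
    have hsplit : (z^2+1) ^ (-(1:ℝ)/4) = (z^2+1) * (z^2+1) ^ (-(1:ℝ)/4 - 1) := by
      rw [← Real.rpow_one_add' hzq.le (by norm_num)]
      norm_num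
    have hb : z^2 * (z^2+1) ^ (-(1:ℝ)/4 - 1) ≤ (z^2+1) * (z^2+1) ^ (-(1:ℝ)/4 - 1) :=
      mul_le_mul_of_nonneg_right (by linarith) (Real.rpow_nonneg hzq.le _)
    simp only [hD, hφ]
    nlinarith [hb, hsplit]
  have hφint : IntervalIntegrable φ volume 0 η := (contrpow _).intervalIntegrable _ _
  have hDint : IntervalIntegrable (fun z => 2 * D z) volume 0 η :=
    (continuous_const.mul hDcont).intervalIntegrable _ _
  have hmono : ∫ z in (0:ℝ)..η, φ z ≤ ∫ z in (0:ℝ)..η, 2 * D z :=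
    intervalIntegral.integral_mono_on hη.le hφint hDint (fun z _ => key z)
  have hftc : ∫ z in (0:ℝ)..η, D z = η * (η^2+1) ^ (-(1:ℝ)/4) := by
    have h := intervalIntegral.integral_eq_sub_of_hasDerivAt
      (f := fun t => t * (t^2+1) ^ (-(1:ℝ)/4)) (a := 0) (b := η) (fun z _ => hg z)
      (hDcont.intervalIntegrable _ _)
    simpa using h
  have hgoal : ∫ z in (0:ℝ)..η, φ z ≤ 2 * (η^2+1) ^ ((1:ℝ)/4) := by
    rw [intervalIntegral.integral_const_mul, hftc] at hmono
    refine hmono.trans ?_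
    have hzq : (0:ℝ) < η^2+1 := by positivity
    have h1 : η ≤ (η^2+1) ^ ((1:ℝ)/2) := by
      have h2 : (η^2 : ℝ) ^ ((1:ℝ)/2) ≤ (η^2+1) ^ ((1:ℝ)/2) :=
        Real.rpow_le_rpow (by positivity) (by linarith) (by norm_num)
      have h3 : (η^2 : ℝ) ^ ((1:ℝ)/2) = η := by
        rw [← Real.rpow_natCast η 2, ← Real.rpow_mul hη.le]
        norm_num
      linarith
    have h4 : (η^2+1) ^ ((1:ℝ)/2) * (η^2+1) ^ (-(1:ℝ)/4) = (η^2+1) ^ ((1:ℝ)/4) := by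
      rw [← Real.rpow_add hzq]
      norm_num
    nlinarith [Real.rpow_nonneg hzq.le (-(1:ℝ)/4), Real.rpow_pos_of_pos hzq ((1:ℝ)/2),
      mul_le_mul_of_nonneg_right h1 (Real.rpow_nonneg hzq.le (-(1:ℝ)/4))]
  have hIoo : IntegrableOn φ (Ioo 0 η) volume :=
    ((contrpow _).integrableOn_Icc (a := 0) (b := η)).mono_set Ioo_subset_Icc_self
  rw [← ofReal_integral_eq_lintegral_ofReal hIoo
    (ae_of_all _ fun z => Real.rpow_nonneg (by positivity) _)]
  refine ENNReal.ofReal_le_ofReal ?_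
  rw [← MeasureTheory.integral_Ioc_eq_integral_Ioo, ← intervalIntegral.integral_of_le hη.le]
  exact hgoal

lemma oneDim (l : ℕ) (f : ℝ → ℝ) (hf : Measurable f) :
    ∫⁻ z in Ioi (0:ℝ), ENNReal.ofReal ((Real.sqrt (z^2+1) ^ l * ∫ η in Ioi z, f η)^2)
      ≤ 8 * ∫⁻ η in Ioi (0:ℝ), ENNReal.ofReal ((Real.sqrt (η^2+1) ^ (l+1) * f η)^2) := by
  set β : ℝ := 1/8 - ((l:ℝ)+1)/2 with hβ
  have hq : ∀ t : ℝ, (0:ℝ) < t^2+1 := fun t => by positivity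
  set A : ℝ → ENNReal := fun η => ENNReal.ofReal (|f η| * (η^2+1) ^ (-β)) with hA
  set B : ℝ → ENNReal := fun η => ENNReal.ofReal ((η^2+1) ^ β) with hB
  set G : ℝ → ENNReal := fun η => ENNReal.ofReal (f η^2 * (η^2+1) ^ ((l:ℝ) + 3/4)) with hG
  have hrp : ∀ c : ℝ, Measurable (fun t : ℝ => (t^2+1) ^ c) := by
    intro c; fun_prop
  have hAmeas : Measurable A := ((hf.abs).mul (hrp (-β))).ennreal_ofReal
  have hBmeas : Measurable B := (hrp β).ennreal_ofReal
  have hGmeas : Measurable G := ((hf.pow_const 2).mul (hrp ((l:ℝ)+3/4))).ennreal_ofReal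
  -- A^2 = G
  have hA2 : ∀ η, A η ^ (2:ℝ) = G η := by
    intro η
    rw [hA, hG]
    rw [ENNReal.ofReal_rpow_of_nonneg (by positivity) (by norm_num)]
    congr 1
    rw [Real.mul_rpow (abs_nonneg _) (Real.rpow_nonneg (hq η).le _),
      Real.rpow_two, Real.rpow_two, sq_abs,
      ← Real.rpow_natCast ((η^2+1) ^ (-β)) 2, ← Real.rpow_mul (hq η).le]
    congr 1
    rw [hβ]; push_cast; ring
  -- B^2 pointwise
  have hB2 : ∀ z η : ℝ, 0 ≤ z → z ≤ η →
      B η ^ (2:ℝ) ≤ ENNReal.ofReal ((z^2+1) ^ (-(l:ℝ))) * ENNReal.ofReal ((η^2+1) ^ (-(3:ℝ)/4)) := by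
    intro z η hz hzη
    rw [hB, ENNReal.ofReal_rpow_of_nonneg (Real.rpow_nonneg (hq η).le _) (by norm_num),
      Real.rpow_two, ← Real.rpow_natCast ((η^2+1) ^ β) 2, ← Real.rpow_mul (hq η).le,
      ← ENNReal.ofReal_mul (Real.rpow_nonneg (hq z).le _)]
    refine ENNReal.ofReal_le_ofReal ?_
    have hsplit : (η^2+1 : ℝ) ^ (β * (2:ℕ)) = (η^2+1) ^ (-(l:ℝ)) * (η^2+1) ^ (-(3:ℝ)/4) := by
      rw [← Real.rpow_add (hq η)]
      congr 1
      rw [hβ]; push_cast; ring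
    rw [hsplit]
    refine mul_le_mul_of_nonneg_right ?_ (Real.rpow_nonneg (hq η).le _)
    refine Real.rpow_le_rpow_of_nonpos (hq z) ?_ (neg_nonpos.2 (Nat.cast_nonneg l))
    nlinarith
  -- Hölder
  have hHolder : ∀ z : ℝ, (∫⁻ η in Ioi z, ENNReal.ofReal |f η|)
      ≤ (∫⁻ η in Ioi z, A η ^ (2:ℝ)) ^ ((1:ℝ)/2) * (∫⁻ η in Ioi z, B η ^ (2:ℝ)) ^ ((1:ℝ)/2) := by
    intro z
    have hconj : Real.HolderConjugate 2 2 := Real.HolderConjugate.two_two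
    have h := ENNReal.lintegral_mul_le_Lp_mul_Lq (volume.restrict (Ioi z)) hconj
      hAmeas.aemeasurable hBmeas.aemeasurable
    have heq : ∀ η : ℝ, (A * B) η = ENNReal.ofReal |f η| := by
      intro η
      simp only [Pi.mul_apply, hA, hB]
      rw [← ENNReal.ofReal_mul (by positivity)]
      congr 1
      rw [mul_assoc, ← Real.rpow_add (hq η)]
      simp
    calc (∫⁻ η in Ioi z, ENNReal.ofReal |f η|) = ∫⁻ η in Ioi z, (A * B) η :=
          lintegral_congr fun η => (heq η).symm
      _ ≤ _ := by simpa using h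
  -- pointwise claim
  have claim1 : ∀ z : ℝ, z ∈ Ioi (0:ℝ) →
      ENNReal.ofReal ((Real.sqrt (z^2+1) ^ l * ∫ η in Ioi z, f η)^2)
        ≤ ENNReal.ofReal (4 * (z^2+1) ^ (-(1:ℝ)/4)) * ∫⁻ η in Ioi z, G η := by
    intro z hz
    rw [mem_Ioi] at hz
    set F := ∫ η in Ioi z, f η with hF
    have hc2 : (Real.sqrt (z^2+1) ^ l)^2 = (z^2+1)^l := by
      rw [← pow_mul, mul_comm l 2, pow_mul, Real.sq_sqrt (hq z).le]
    have hsplitL : ENNReal.ofReal ((Real.sqrt (z^2+1) ^ l * F)^2)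
        = ENNReal.ofReal ((z^2+1)^l) * ENNReal.ofReal |F| ^ 2 := by
      rw [mul_pow, hc2, ENNReal.ofReal_mul (by positivity),
        ← ENNReal.ofReal_pow (abs_nonneg F), sq_abs]
    have hFle : ENNReal.ofReal |F| ≤ ∫⁻ η in Ioi z, ENNReal.ofReal |f η| := by
      rw [← Real.enorm_eq_ofReal_abs]
      refine (enorm_integral_le_lintegral_enorm _).trans ?_
      refine lintegral_mono fun η => ?_
      rw [Real.enorm_eq_ofReal_abs]
    have hXY : ENNReal.ofReal |F| ^ 2
        ≤ (∫⁻ η in Ioi z, A η ^ (2:ℝ)) * (∫⁻ η in Ioi z, B η ^ (2:ℝ)) := by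
      calc ENNReal.ofReal |F| ^ 2 ≤ ((∫⁻ η in Ioi z, A η ^ (2:ℝ)) ^ ((1:ℝ)/2)
            * (∫⁻ η in Ioi z, B η ^ (2:ℝ)) ^ ((1:ℝ)/2)) ^ 2 :=
          pow_le_pow_left₀ zero_le (hFle.trans (hHolder z)) 2
        _ = _ := by
          rw [mul_pow, ← ENNReal.rpow_natCast (_ ^ ((1:ℝ)/2)) 2,
            ← ENNReal.rpow_natCast ((∫⁻ η in Ioi z, B η ^ (2:ℝ)) ^ ((1:ℝ)/2)) 2,
            ← ENNReal.rpow_mul, ← ENNReal.rpow_mul]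
          norm_num
    have hYb : (∫⁻ η in Ioi z, B η ^ (2:ℝ))
        ≤ ENNReal.ofReal ((z^2+1) ^ (-(l:ℝ))) * ENNReal.ofReal (4 * (z^2+1) ^ (-(1:ℝ)/4)) := by
      calc (∫⁻ η in Ioi z, B η ^ (2:ℝ))
          ≤ ∫⁻ η in Ioi z, ENNReal.ofReal ((z^2+1) ^ (-(l:ℝ)))
              * ENNReal.ofReal ((η^2+1) ^ (-(3:ℝ)/4)) :=
            setLIntegral_mono' measurableSet_Ioi fun η hη => hB2 z η hz.le (le_of_lt hη)
        _ = ENNReal.ofReal ((z^2+1) ^ (-(l:ℝ)))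
              * ∫⁻ η in Ioi z, ENNReal.ofReal ((η^2+1) ^ (-(3:ℝ)/4)) :=
            lintegral_const_mul' _ _ ENNReal.ofReal_ne_top
        _ ≤ _ := mul_le_mul_right (tailA hz.le) _
    have hcancel : ENNReal.ofReal ((z^2+1)^l) * ENNReal.ofReal ((z^2+1) ^ (-(l:ℝ))) = 1 := by
      rw [← ENNReal.ofReal_mul (by positivity), ← Real.rpow_natCast (z^2+1) l,
        ← Real.rpow_add (hq z)]
      simp
    have hXG : (∫⁻ η in Ioi z, A η ^ (2:ℝ)) = ∫⁻ η in Ioi z, G η :=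
      lintegral_congr fun η => hA2 η
    calc ENNReal.ofReal ((Real.sqrt (z^2+1) ^ l * F)^2)
        = ENNReal.ofReal ((z^2+1)^l) * ENNReal.ofReal |F| ^ 2 := hsplitL
      _ ≤ ENNReal.ofReal ((z^2+1)^l) * ((∫⁻ η in Ioi z, A η ^ (2:ℝ))
            * (ENNReal.ofReal ((z^2+1) ^ (-(l:ℝ))) * ENNReal.ofReal (4 * (z^2+1) ^ (-(1:ℝ)/4)))) :=
          mul_le_mul_right (hXY.trans (mul_le_mul_right hYb _)) _
      _ = (ENNReal.ofReal ((z^2+1)^l) * ENNReal.ofReal ((z^2+1) ^ (-(l:ℝ))))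
            * ENNReal.ofReal (4 * (z^2+1) ^ (-(1:ℝ)/4)) * (∫⁻ η in Ioi z, A η ^ (2:ℝ)) := by
          ring
      _ = ENNReal.ofReal (4 * (z^2+1) ^ (-(1:ℝ)/4)) * ∫⁻ η in Ioi z, G η := by
          rw [hcancel, one_mul, hXG]
  set c : ℝ → ENNReal := fun z => ENNReal.ofReal (4 * (z^2+1) ^ (-(1:ℝ)/4)) with hc
  have step2 : ∫⁻ z in Ioi (0:ℝ), ENNReal.ofReal ((Real.sqrt (z^2+1) ^ l * ∫ η in Ioi z, f η)^2)
      ≤ ∫⁻ z in Ioi (0:ℝ), c z * ∫⁻ η in Ioi z, G η :=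
    setLIntegral_mono' measurableSet_Ioi claim1
  have step3 : ∫⁻ z in Ioi (0:ℝ), c z * ∫⁻ η in Ioi z, G η
      = ∫⁻ z in Ioi (0:ℝ), ∫⁻ η in Ioi (0:ℝ), c z * (Ioi z).indicator G η := by
    refine setLIntegral_congr_fun measurableSet_Ioi (fun z hz => ?_)
    rw [mem_Ioi] at hz
    have hTz : (∫⁻ η in Ioi z, G η) = ∫⁻ η in Ioi (0:ℝ), (Ioi z).indicator G η := by
      rw [lintegral_indicator measurableSet_Ioi, Measure.restrict_restrict measurableSet_Ioi,
        inter_eq_self_of_subset_left (Ioi_subset_Ioi hz.le)]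
    rw [hTz, ← lintegral_const_mul' _ _ ENNReal.ofReal_ne_top]
  have hunc : AEMeasurable (Function.uncurry fun z η => c z * (Ioi z).indicator G η)
      ((volume.restrict (Ioi (0:ℝ))).prod (volume.restrict (Ioi (0:ℝ)))) := by
    have hcm : Measurable c := by
      refine Measurable.ennreal_ofReal ?_
      exact measurable_const.mul (hrp _)
    have heqfun : (Function.uncurry fun z η => c z * (Ioi z).indicator G η)
        = fun p : ℝ × ℝ => c p.1 * (if p.1 < p.2 then G p.2 else 0) := by
      funext p
      simp [Function.uncurry, indicator_apply]
    rw [heqfun]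
    exact ((hcm.comp measurable_fst).mul
      (Measurable.ite (measurableSet_lt measurable_fst measurable_snd)
        (hGmeas.comp measurable_snd) measurable_const)).aemeasurable
  have step4 : ∫⁻ z in Ioi (0:ℝ), ∫⁻ η in Ioi (0:ℝ), c z * (Ioi z).indicator G η
      = ∫⁻ η in Ioi (0:ℝ), ∫⁻ z in Ioi (0:ℝ), c z * (Ioi z).indicator G η :=
    lintegral_lintegral_swap hunc
  have step5 : ∀ η : ℝ, η ∈ Ioi (0:ℝ) →
      (∫⁻ z in Ioi (0:ℝ), c z * (Ioi z).indicator G η)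
        ≤ ENNReal.ofReal 8 * ENNReal.ofReal ((Real.sqrt (η^2+1) ^ (l+1) * f η)^2) := by
    intro η hη
    rw [mem_Ioi] at hη
    have hfun : (fun z => c z * (Ioi z).indicator G η)
        = (Iio η).indicator (fun z => c z * G η) := by
      funext z
      by_cases h : z < η <;> simp [indicator_apply, h]
    rw [hfun, lintegral_indicator measurableSet_Iio,
      Measure.restrict_restrict measurableSet_Iio, inter_comm, Ioi_inter_Iio]
    have hmul : (∫⁻ z in Ioo (0:ℝ) η, c z * G η) = (∫⁻ z in Ioo (0:ℝ) η, c z) * G η :=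
      lintegral_mul_const' _ _ ENNReal.ofReal_ne_top
    rw [hmul]
    have hcint : (∫⁻ z in Ioo (0:ℝ) η, c z)
        ≤ ENNReal.ofReal 4 * ENNReal.ofReal (2 * (η^2+1) ^ ((1:ℝ)/4)) := by
      have : (∫⁻ z in Ioo (0:ℝ) η, c z)
          = ENNReal.ofReal 4 * ∫⁻ z in Ioo (0:ℝ) η, ENNReal.ofReal ((z^2+1) ^ (-(1:ℝ)/4)) := by
        rw [← lintegral_const_mul' _ _ ENNReal.ofReal_ne_top]
        refine setLIntegral_congr_fun measurableSet_Ioo (fun z _ => ?_)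
        exact ENNReal.ofReal_mul (by norm_num)
      rw [this]
      exact mul_le_mul_right (frontC hη) _
    have hR : (Real.sqrt (η^2+1) ^ (l+1) * f η)^2 = f η^2 * (η^2+1) ^ ((l:ℝ)+1) := by
      rw [mul_pow, ← pow_mul, mul_comm (l+1) 2, pow_mul, Real.sq_sqrt (hq η).le,
        ← Real.rpow_natCast (η^2+1) (l+1)]
      push_cast; ring
    calc (∫⁻ z in Ioo (0:ℝ) η, c z) * G η
        ≤ (ENNReal.ofReal 4 * ENNReal.ofReal (2 * (η^2+1) ^ ((1:ℝ)/4))) * G η :=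
          mul_le_mul_left hcint _
      _ = ENNReal.ofReal 8 * ENNReal.ofReal ((Real.sqrt (η^2+1) ^ (l+1) * f η)^2) := by
          rw [hG, hR, mul_assoc, ← ENNReal.ofReal_mul (by positivity),
            ← ENNReal.ofReal_mul (by norm_num), ← ENNReal.ofReal_mul (by norm_num)]
          congr 1
          have hline : (η^2+1) ^ ((1:ℝ)/4) * (η^2+1) ^ ((l:ℝ) + 3/4)
              = (η^2+1) ^ ((l:ℝ)+1) := by
            rw [← Real.rpow_add (hq η)]; congr 1; ring
          linear_combination 8 * f η ^ 2 * hline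
  calc ∫⁻ z in Ioi (0:ℝ), ENNReal.ofReal ((Real.sqrt (z^2+1) ^ l * ∫ η in Ioi z, f η)^2)
      ≤ ∫⁻ z in Ioi (0:ℝ), c z * ∫⁻ η in Ioi z, G η := step2
    _ = ∫⁻ η in Ioi (0:ℝ), ∫⁻ z in Ioi (0:ℝ), c z * (Ioi z).indicator G η := by
        rw [step3, step4]
    _ ≤ ∫⁻ η in Ioi (0:ℝ), ENNReal.ofReal 8
          * ENNReal.ofReal ((Real.sqrt (η^2+1) ^ (l+1) * f η)^2) :=
        setLIntegral_mono' measurableSet_Ioi step5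
    _ = 8 * ∫⁻ η in Ioi (0:ℝ), ENNReal.ofReal ((Real.sqrt (η^2+1) ^ (l+1) * f η)^2) := by
        rw [lintegral_const_mul' _ _ ENNReal.ofReal_ne_top]
        norm_num

/-- Weighted Hardy-type estimate for tail integrals: if `⟨z⟩^{l+1} m ∈ L²(ℝ×(0,∞))`
then `F(x,z) = ∫_z^∞ m(x,η) dη` satisfies `⟨z⟩^l F ∈ L²` with
`‖⟨z⟩^l F‖_{L²} ≤ C ‖⟨z⟩^{l+1} m‖_{L²}`, where `C` depends only on `l`. -/
theorem weighted_tail_integral_bound (l : ℕ) :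
    ∃ C : ℝ, 0 < C ∧ ∀ m : ℝ → ℝ → ℝ,
      Measurable (fun p : ℝ × ℝ => m p.1 p.2) →
      Integrable (fun p : ℝ × ℝ => (Real.sqrt (p.2 ^ 2 + 1) ^ (l + 1) * m p.1 p.2) ^ 2)
        ((volume : Measure ℝ).prod ((volume : Measure ℝ).restrict (Set.Ioi 0))) →
      (Integrable (fun p : ℝ × ℝ =>
          (Real.sqrt (p.2 ^ 2 + 1) ^ l * ∫ η in Set.Ioi p.2, m p.1 η) ^ 2)
        ((volume : Measure ℝ).prod ((volume : Measure ℝ).restrict (Set.Ioi 0))) ∧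
      Real.sqrt (∫ x : ℝ, ∫ z in Set.Ioi (0:ℝ),
          (Real.sqrt (z ^ 2 + 1) ^ l * ∫ η in Set.Ioi z, m x η) ^ 2) ≤
        C * Real.sqrt (∫ x : ℝ, ∫ z in Set.Ioi (0:ℝ),
          (Real.sqrt (z ^ 2 + 1) ^ (l + 1) * m x z) ^ 2)) := by
  refine ⟨3, by norm_num, fun m hm hInt => ?_⟩
  set μ := (volume : Measure ℝ).prod ((volume : Measure ℝ).restrict (Set.Ioi 0)) with hμ
  set H : ℝ × ℝ → ℝ :=
    fun p => (Real.sqrt (p.2 ^ 2 + 1) ^ l * ∫ η in Set.Ioi p.2, m p.1 η) ^ 2 with hH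
  set Gf : ℝ × ℝ → ℝ :=
    fun p => (Real.sqrt (p.2 ^ 2 + 1) ^ (l + 1) * m p.1 p.2) ^ 2 with hGf
  -- measurability of the tail integral
  have hFm : StronglyMeasurable (fun p : ℝ × ℝ => ∫ η in Set.Ioi p.2, m p.1 η) := by
    have h1 : (fun p : ℝ × ℝ => ∫ η in Set.Ioi p.2, m p.1 η)
        = fun p : ℝ × ℝ => ∫ η, (Ioi p.2).indicator (m p.1) η := by
      funext p
      rw [integral_indicator measurableSet_Ioi]
    rw [h1]
    refine MeasureTheory.StronglyMeasurable.integral_prod_right'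
      (f := fun q : (ℝ × ℝ) × ℝ => (Ioi q.1.2).indicator (m q.1.1) q.2) ?_
    have h2 : (fun q : (ℝ × ℝ) × ℝ => (Ioi q.1.2).indicator (m q.1.1) q.2)
        = fun q : (ℝ × ℝ) × ℝ => if q.1.2 < q.2 then m q.1.1 q.2 else 0 := by
      funext q
      simp [indicator_apply]
    rw [h2]
    refine Measurable.stronglyMeasurable ?_
    exact Measurable.ite (measurableSet_lt (measurable_snd.comp measurable_fst) measurable_snd)
      (hm.comp ((measurable_fst.comp measurable_fst).prodMk measurable_snd)) measurable_const
  have hHmeas : Measurable H := by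
    refine Measurable.pow_const (Measurable.mul ?_ hFm.measurable) 2
    fun_prop
  have hGmeas : Measurable Gf := by fun_prop
  have hHnn : ∀ p, 0 ≤ H p := fun p => sq_nonneg _
  have hGnn : ∀ p, 0 ≤ Gf p := fun p => sq_nonneg _
  -- key lintegral inequality
  have key : (∫⁻ p, ENNReal.ofReal (H p) ∂μ) ≤ 8 * ∫⁻ p, ENNReal.ofReal (Gf p) ∂μ := by
    rw [lintegral_prod _ (hHmeas.ennreal_ofReal.aemeasurable),
      lintegral_prod _ (hGmeas.ennreal_ofReal.aemeasurable)]
    calc ∫⁻ x, ∫⁻ z in Ioi (0:ℝ), ENNReal.ofReal (H (x, z))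
        ≤ ∫⁻ x, 8 * ∫⁻ z in Ioi (0:ℝ), ENNReal.ofReal (Gf (x, z)) := by
          refine lintegral_mono fun x => ?_
          exact oneDim l (m x) (hm.comp measurable_prodMk_left)
      _ = 8 * ∫⁻ x, ∫⁻ z in Ioi (0:ℝ), ENNReal.ofReal (Gf (x, z)) :=
          lintegral_const_mul' _ _ (by norm_num)
  -- finiteness of G side
  have hGfin : (∫⁻ p, ENNReal.ofReal (Gf p) ∂μ) < ⊤ :=
    (hasFiniteIntegral_iff_ofReal (ae_of_all _ hGnn)).1 hInt.hasFiniteIntegral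
  have hHint : Integrable H μ := by
    refine ⟨hHmeas.aestronglyMeasurable, ?_⟩
    rw [hasFiniteIntegral_iff_ofReal (ae_of_all _ hHnn)]
    exact key.trans_lt (ENNReal.mul_lt_top (by norm_num) hGfin)
  refine ⟨hHint, ?_⟩
  -- rewrite iterated integrals as integrals over the product measure
  have hHiter : (∫ x : ℝ, ∫ z in Set.Ioi (0:ℝ),
      (Real.sqrt (z ^ 2 + 1) ^ l * ∫ η in Set.Ioi z, m x η) ^ 2) = ∫ p, H p ∂μ :=
    (integral_prod _ hHint).symm
  have hGiter : (∫ x : ℝ, ∫ z in Set.Ioi (0:ℝ),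
      (Real.sqrt (z ^ 2 + 1) ^ (l + 1) * m x z) ^ 2) = ∫ p, Gf p ∂μ :=
    (integral_prod _ hInt).symm
  rw [hHiter, hGiter,
    integral_eq_lintegral_of_nonneg_ae (ae_of_all _ hHnn) hHmeas.aestronglyMeasurable,
    integral_eq_lintegral_of_nonneg_ae (ae_of_all _ hGnn) hGmeas.aestronglyMeasurable]
  have htoReal : (∫⁻ p, ENNReal.ofReal (H p) ∂μ).toReal
      ≤ 8 * (∫⁻ p, ENNReal.ofReal (Gf p) ∂μ).toReal := by
    refine (ENNReal.toReal_mono (ENNReal.mul_lt_top (by norm_num) hGfin).ne key).trans ?_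
    rw [ENNReal.toReal_mul]
    norm_num
  have hs8 : Real.sqrt 8 ≤ 3 := by
    rw [show (3:ℝ) = Real.sqrt 9 by
      rw [show (9:ℝ) = 3^2 by norm_num, Real.sqrt_sq (by norm_num)]]
    exact Real.sqrt_le_sqrt (by norm_num)
  calc Real.sqrt (∫⁻ p, ENNReal.ofReal (H p) ∂μ).toReal
      ≤ Real.sqrt (8 * (∫⁻ p, ENNReal.ofReal (Gf p) ∂μ).toReal) := Real.sqrt_le_sqrt htoReal
    _ = Real.sqrt 8 * Real.sqrt (∫⁻ p, ENNReal.ofReal (Gf p) ∂μ).toReal :=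
        Real.sqrt_mul (by norm_num) _
    _ ≤ 3 * Real.sqrt (∫⁻ p, ENNReal.ofReal (Gf p) ∂μ).toReal :=
        mul_le_mul_of_nonneg_right hs8 (Real.sqrt_nonneg _)
end

section
/- Let U : ℝ × [0,∞) → ℝ be continuously differentiable with U(x,0) = 0 for all x, ∂_y U ∈ L²(ℝ × (0,∞)), and let c : ℝ × (0,∞) → ℝ satisfy ∫_0^∞ z · sup_x |c(x,z)|² dz < ∞. Let ε > 0 and V ∈ L²(ℝ × (0,∞)). Then |ε^{-1/2} ∫_ℝ ∫_0^∞ U(x,y) c(x, y/√ε) V(x,y) dy dx| ≤ ‖∂_y U‖_{L²} · ‖V‖_{L²} · (∫_0^∞ z · sup_x |c(x,z)|² dz)^{1/2}. -/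
/-! Since `U(x,0) = 0`, the fundamental theorem of calculus and Cauchy–Schwarz on `(0,y)` give
`|U(x,y)| ≤ y^{1/2} ‖∂_y U(x,·)‖_{L²}`. The weight `y^{1/2}` is paired with `c`: the substitution
`y = √ε z` turns `∫ y |c(x, y/√ε)|² dy` into `ε ∫ z |c(x,z)|² dz`, so Cauchy–Schwarz in `y`
yields a factor `ε^{1/2}` that cancels `ε^{-1/2}`. A last Cauchy–Schwarz in `x` concludes. -/

open MeasureTheory Set Real

section CauchySchwarz
variable {α : Type*} [MeasurableSpace α] {μ : Measure α} {f g : α → ℝ}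

theorem integral_abs_mul_abs_le_sqrt_mul_sqrt (hf : MemLp f 2 μ) (hg : MemLp g 2 μ) :
    ∫ a, |f a| * |g a| ∂μ ≤ √(∫ a, f a ^ 2 ∂μ) * √(∫ a, g a ^ 2 ∂μ) := by
  have h := integral_mul_norm_le_Lp_mul_Lq HolderConjugate.two_two (by simpa using hf)
    (by simpa using hg)
  simpa only [norm_eq_abs, rpow_two, sq_abs, sqrt_eq_rpow, one_div] using h

theorem abs_integral_le_mul_sqrt_integral_mul_sqrt_integral {F D B : α → ℝ} {K : ℝ} (hK : 0 ≤ K)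
    (hF : ∀ᵐ a ∂μ, |F a| ≤ K * (√(D a) * √(B a))) (hD : Integrable D μ) (hB : Integrable B μ)
    (hD0 : 0 ≤ D) (hB0 : 0 ≤ B) :
    |∫ a, F a ∂μ| ≤ K * (√(∫ a, D a ∂μ) * √(∫ a, B a ∂μ)) := by
  have hL2 : ∀ {G : α → ℝ}, Integrable G μ → 0 ≤ G → MemLp (fun a => √(G a)) 2 μ := fun hG hG0 =>
    (memLp_two_iff_integrable_sq (continuous_sqrt.comp_aestronglyMeasurable
      hG.aestronglyMeasurable)).mpr (hG.congr (.of_forall fun a => (sq_sqrt (hG0 a)).symm))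
  have hcs := integral_abs_mul_abs_le_sqrt_mul_sqrt (hL2 hD hD0) (hL2 hB hB0)
  simp only [abs_of_nonneg (sqrt_nonneg _), sq_sqrt (hD0 _), sq_sqrt (hB0 _)] at hcs
  calc |∫ a, F a ∂μ| ≤ ∫ a, K * (√(D a) * √(B a)) ∂μ := by
        rw [← norm_eq_abs]
        refine norm_integral_le_of_norm_le ?_ hF
        exact ((hL2 hD hD0).integrable_mul (hL2 hB hB0)).const_mul K
    _ = K * ∫ a, √(D a) * √(B a) ∂μ := by rw [integral_const_mul]
    _ ≤ K * (√(∫ a, D a ∂μ) * √(∫ a, B a ∂μ)) := by gcongr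

end CauchySchwarz

theorem integral_Ioi_mul_comp_div (g : ℝ → ℝ) {s : ℝ} (hs : 0 < s) :
    ∫ y in Ioi 0, y * g (y / s) = s ^ 2 * ∫ z in Ioi 0, z * g z := by
  have h := integral_comp_mul_right_Ioi (fun z => z * g z) 0 (inv_pos.mpr hs)
  simp only [zero_mul, smul_eq_mul, inv_inv] at h
  rw [sq, mul_assoc, ← h, ← integral_const_mul]
  refine setIntegral_congr_fun measurableSet_Ioi fun y _ => ?_
  field_simp

theorem integrableOn_Ioi_mul_comp_div_iff (g : ℝ → ℝ) {s : ℝ} (hs : 0 < s) :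
    IntegrableOn (fun y => y * g (y / s)) (Ioi 0) ↔ IntegrableOn (fun z => z * g z) (Ioi 0) := by
  have h := integrableOn_Ioi_comp_mul_right_iff (fun z => z * g z) 0 (inv_pos.mpr hs)
  rw [zero_mul, IntegrableOn, ← integrable_const_mul_iff (isUnit_iff_ne_zero.mpr hs.ne')] at h
  rw [← h]
  refine integrableOn_congr_fun (fun y _ => ?_) measurableSet_Ioi
  field_simp

theorem abs_le_sqrt_mul_sqrt_integral_sq_deriv {f f' : ℝ → ℝ} (hf : ∀ t, HasDerivAt f (f' t) t)
    (hf' : Continuous f') (h0 : f 0 = 0) (hint : IntegrableOn (fun t => f' t ^ 2) (Ioi 0))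
    {y : ℝ} (hy : 0 ≤ y) : |f y| ≤ √y * √(∫ t in Ioi 0, f' t ^ 2) := by
  have hftc : f y = ∫ t in Ioc 0 y, f' t := by
    rw [← intervalIntegral.integral_of_le hy,
      intervalIntegral.integral_eq_sub_of_hasDerivAt (fun t _ => hf t)
        (hf'.intervalIntegrable 0 y), h0, sub_zero]
  have hf'L2 : MemLp f' 2 (volume.restrict (Ioc 0 y)) :=
    (memLp_two_iff_integrable_sq hf'.aestronglyMeasurable).mpr
      (hint.mono_set Ioc_subset_Ioi_self)
  have hcs := integral_abs_mul_abs_le_sqrt_mul_sqrt hf'L2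
    (memLp_const (μ := volume.restrict (Ioc 0 y)) (1 : ℝ))
  simp only [abs_one, mul_one, one_pow, integral_const, smul_eq_mul,
    measureReal_restrict_apply_univ, Real.volume_real_Ioc_of_le hy, sub_zero] at hcs
  calc |f y| ≤ ∫ t in Ioc 0 y, |f' t| := hftc ▸ abs_integral_le_integral_abs
    _ ≤ √(∫ t in Ioc 0 y, f' t ^ 2) * √y := hcs
    _ ≤ √(∫ t in Ioi 0, f' t ^ 2) * √y := by
      gcongr
      · exact .of_forall fun t => sq_nonneg _
      · exact Ioc_subset_Ioi_self
    _ = √y * √(∫ t in Ioi 0, f' t ^ 2) := mul_comm _ _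

theorem abs_setIntegral_mul_comp_div_mul_le {u k v g : ℝ → ℝ} {A s : ℝ} (hs : 0 < s)
    (hu : ∀ y, 0 < y → |u y| ≤ √y * A) (hk : Measurable k) (hkg : ∀ z, k z ^ 2 ≤ g z)
    (hg : IntegrableOn (fun z => z * g z) (Ioi 0)) (hv : MemLp v 2 (volume.restrict (Ioi 0))) :
    |∫ y in Ioi 0, u y * k (y / s) * v y| ≤
      A * (s * √(∫ z in Ioi 0, z * g z)) * √(∫ y in Ioi 0, v y ^ 2) := by
  have hA : 0 ≤ A := by simpa using (abs_nonneg _).trans (hu 1 one_pos)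
  set w : ℝ → ℝ := fun y => √y * k (y / s)
  have hw_sq : ∀ y ∈ Ioi (0 : ℝ), w y ^ 2 ≤ y * g (y / s) := fun y hy => by
    rw [mul_pow, sq_sqrt (le_of_lt hy)]
    exact mul_le_mul_of_nonneg_left (hkg _) (le_of_lt hy)
  have hweight := (integrableOn_Ioi_mul_comp_div_iff g hs).mpr hg
  have hw : MemLp w 2 (volume.restrict (Ioi 0)) := by
    have hwm : AEStronglyMeasurable w (volume.restrict (Ioi 0)) :=
      (continuous_sqrt.measurable.mul (hk.comp (measurable_id.div_const s))).aestronglyMeasurable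
    refine (memLp_two_iff_integrable_sq hwm).mpr (hweight.mono' (hwm.pow 2) ?_)
    filter_upwards [ae_restrict_mem measurableSet_Ioi] with y hy
    rw [norm_of_nonneg (sq_nonneg _)]
    exact hw_sq y hy
  have hw_int : ∫ y in Ioi 0, w y ^ 2 ≤ s ^ 2 * ∫ z in Ioi 0, z * g z := by
    rw [← integral_Ioi_mul_comp_div g hs]
    exact setIntegral_mono_on hw.integrable_sq hweight measurableSet_Ioi hw_sq
  calc |∫ y in Ioi 0, u y * k (y / s) * v y|
      ≤ ∫ y in Ioi 0, A * (|w y| * |v y|) := by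
        rw [← norm_eq_abs]
        refine norm_integral_le_of_norm_le ?_ ?_
        · exact (hw.norm.integrable_mul hv.norm).const_mul A
        filter_upwards [ae_restrict_mem measurableSet_Ioi] with y hy
        rw [norm_eq_abs, abs_mul, abs_mul, abs_mul, abs_of_nonneg (sqrt_nonneg y)]
        calc |u y| * |k (y / s)| * |v y| ≤ √y * A * |k (y / s)| * |v y| := by gcongr; exact hu y hy
          _ = A * (√y * |k (y / s)| * |v y|) := by ring
    _ = A * ∫ y in Ioi 0, |w y| * |v y| := by rw [integral_const_mul]
    _ ≤ A * (√(∫ y in Ioi 0, w y ^ 2) * √(∫ y in Ioi 0, v y ^ 2)) := by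
        gcongr
        exact integral_abs_mul_abs_le_sqrt_mul_sqrt hw hv
    _ ≤ A * (√(s ^ 2 * ∫ z in Ioi 0, z * g z) * √(∫ y in Ioi 0, v y ^ 2)) := by gcongr
    _ = A * (s * √(∫ z in Ioi 0, z * g z)) * √(∫ y in Ioi 0, v y ^ 2) := by
        rw [sqrt_mul (sq_nonneg s), sqrt_sq hs.le]
        ring

section PartialDeriv
variable {E : Type*} [NormedAddCommGroup E] [NormedSpace ℝ E] {U : E → ℝ → ℝ}

theorem hasDerivAt_fderiv_uncurry_apply (hU : Differentiable ℝ fun p : E × ℝ => U p.1 p.2)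
    (x : E) (y : ℝ) :
    HasDerivAt (U x) (fderiv ℝ (fun p : E × ℝ => U p.1 p.2) (x, y) (0, 1)) y :=
  (hU (x, y)).hasFDerivAt.comp_hasDerivAt y ((hasDerivAt_const y x).prodMk (hasDerivAt_id y))

theorem continuous_deriv_of_contDiff_uncurry (hU : ContDiff ℝ 1 fun p : E × ℝ => U p.1 p.2) :
    Continuous fun p : E × ℝ => deriv (U p.1) p.2 := by
  have h := hasDerivAt_fderiv_uncurry_apply (hU.differentiable one_ne_zero)
  simp only [fun p : E × ℝ => (h p.1 p.2).deriv]
  exact (hU.continuous_fderiv one_ne_zero).clm_apply continuous_const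

end PartialDeriv

/-- Boundary-vanishing trick of estimate (a74)–(a18): if `U(x,0) = 0` and
`∂_y U ∈ L²`, then the singular factor `ε^{-1/2}` in the boundary-layer term is
cancelled by the weight `z^{1/2}` of the profile `c`. -/
theorem boundary_vanishing_estimate (U c V : ℝ → ℝ → ℝ) (ε : ℝ) (hε : 0 < ε)
    (hU : ContDiff ℝ 1 fun p : ℝ × ℝ => U p.1 p.2)
    (hU0 : ∀ x, U x 0 = 0)
    (hbdd : ∀ z : ℝ, BddAbove (Set.range fun x => (c x z) ^ 2))
    (hVmeas : Measurable fun p : ℝ × ℝ => V p.1 p.2)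
    (hcmeas : Measurable fun p : ℝ × ℝ => c p.1 p.2)
    (hDU : Integrable (fun p : ℝ × ℝ => (deriv (fun y => U p.1 y) p.2) ^ 2)
      ((volume : Measure ℝ).prod ((volume : Measure ℝ).restrict (Set.Ioi 0))))
    (hV : Integrable (fun p : ℝ × ℝ => (V p.1 p.2) ^ 2)
      ((volume : Measure ℝ).prod ((volume : Measure ℝ).restrict (Set.Ioi 0))))
    (hc : IntegrableOn (fun z => z * ⨆ x, (c x z) ^ 2) (Set.Ioi 0)) :
    |ε ^ (-(1:ℝ)/2) * ∫ x : ℝ, ∫ y in Set.Ioi (0:ℝ), U x y * c x (y / Real.sqrt ε) * V x y| ≤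
      Real.sqrt (∫ x : ℝ, ∫ y in Set.Ioi (0:ℝ), (deriv (fun y' => U x y') y) ^ 2) *
      Real.sqrt (∫ x : ℝ, ∫ y in Set.Ioi (0:ℝ), (V x y) ^ 2) *
      Real.sqrt (∫ z in Set.Ioi (0:ℝ), z * ⨆ x, (c x z) ^ 2) := by
  have hs : 0 < √ε := sqrt_pos.mpr hε
  have hderiv (x y : ℝ) : HasDerivAt (U x) (deriv (U x) y) y :=
    (hasDerivAt_fderiv_uncurry_apply (hU.differentiable one_ne_zero) x y).differentiableAt
      |>.hasDerivAt
  have hslice : ∀ᵐ x, |∫ y in Ioi 0, U x y * c x (y / √ε) * V x y| ≤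
      √ε * √(∫ z in Ioi 0, z * ⨆ x, c x z ^ 2) *
        (√(∫ y in Ioi 0, deriv (U x) y ^ 2) * √(∫ y in Ioi 0, V x y ^ 2)) := by
    filter_upwards [hDU.prod_right_ae, hV.prod_right_ae] with x hDx hVx
    have hUx (y : ℝ) (hy : 0 < y) := abs_le_sqrt_mul_sqrt_integral_sq_deriv (hderiv x)
      ((continuous_deriv_of_contDiff_uncurry hU).comp (.prodMk_right x)) (hU0 x) hDx hy.le
    have hVx2 : MemLp (V x) 2 (volume.restrict (Ioi 0)) :=
      (memLp_two_iff_integrable_sq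
        (hVmeas.comp measurable_prodMk_left).aestronglyMeasurable).mpr hVx
    exact (abs_setIntegral_mul_comp_div_mul_le hs hUx (hcmeas.comp measurable_prodMk_left)
      (fun z => le_ciSup (hbdd z) x) hc hVx2).trans_eq (by ring)
  have hbound := abs_integral_le_mul_sqrt_integral_mul_sqrt_integral (by positivity) hslice
    hDU.integral_prod_left hV.integral_prod_left (fun x => integral_nonneg fun y => sq_nonneg _)
    (fun x => integral_nonneg fun y => sq_nonneg _)
  rw [abs_mul, abs_of_nonneg (rpow_nonneg hε.le _), neg_div, rpow_neg hε.le, ← sqrt_eq_rpow,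
    inv_mul_le_iff₀ hs]
  exact hbound.trans_eq (by ring)
end

section
/- Let c_ε, c₀ : ℝ × [0,∞) × [0,T] → ℝ and c^B : ℝ × [0,∞) × [0,T] → ℝ. Suppose ‖∂_y c_ε(·,·,t) − ∂_y c₀(·,·,t) − ∂_z c^B(·, ·/√ε, t)‖_{L^∞} ≤ C ε^{1/8} for all ε ∈ (0, ε₀) and suppose there exist x₀, t₀ with ∂_z c^B(x₀, 0, t₀) ≠ 0 while ∂_z c^B(x₀, z, t₀) → 0 as z → ∞. Then ‖∂_y c_ε − ∂_y c₀‖_{L^∞} does not tend to 0 as ε → 0; in fact liminf_{ε→0} ‖∂_y c_ε(·,·,t₀) − ∂_y c₀(·,·,t₀)‖_{L^∞} ≥ |∂_z c^B(x₀,0,t₀)|. -/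
open Filter Topology Set

/-!
Fix `z > 0` and probe the expansion at the rescaled point `y = z √ε`, where the boundary layer
is seen at the fixed depth `z`: there `|∂_y c_ε - ∂_y c₀| ≥ |∂_z c^B(x₀, z, t₀)| - C ε^{1/8}`.
Letting `ε → 0` and then `z → 0` gives the bound `|∂_z c^B(x₀, 0, t₀)|`.
-/

lemma tendsto_const_mul_rpow_nhdsGT_zero (C : ℝ) {p : ℝ} (hp : 0 < p) :
    Tendsto (fun ε : ℝ => C * ε ^ p) (𝓝[>] 0) (𝓝 0) := by
  have h : Tendsto (fun ε : ℝ => ε ^ p) (𝓝 0) (𝓝 0) := by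
    simpa only [Real.zero_rpow hp.ne'] using
      (Real.continuousAt_rpow_const 0 p (Or.inr hp.le)).tendsto
  simpa only [mul_zero] using (h.mono_left nhdsWithin_le_nhds).const_mul C

lemma eventually_exists_abs_gt_of_approx_rescaled {f : ℝ → ℝ → ℝ} {g r : ℝ → ℝ}
    (hg : ContinuousWithinAt g (Ioi 0) 0) (hr : Tendsto r (𝓝[>] 0) (𝓝 0))
    (happrox : ∀ᶠ ε in 𝓝[>] 0, ∀ y, 0 < y → |f ε y - g (y / Real.sqrt ε)| ≤ r ε)
    {δ : ℝ} (hδ : 0 < δ) :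
    ∀ᶠ ε in 𝓝[>] 0, ∃ y, 0 < y ∧ |f ε y| > |g 0| - δ := by
  obtain ⟨z, hz, hgz⟩ : ∃ z, 0 < z ∧ |g 0| - δ / 2 < |g z| :=
    (eventually_mem_nhdsWithin.and
      (hg.abs.eventually (lt_mem_nhds (by linarith : |g 0| - δ / 2 < |g 0|)))).exists
  filter_upwards [happrox, hr.eventually (gt_mem_nhds (half_pos hδ)), eventually_mem_nhdsWithin]
    with ε hε hrε (hεpos : 0 < ε)
  have hsqrt : 0 < Real.sqrt ε := Real.sqrt_pos.mpr hεpos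
  refine ⟨z * Real.sqrt ε, mul_pos hz hsqrt, ?_⟩
  have hclose := hε _ (mul_pos hz hsqrt)
  rw [mul_div_cancel_right₀ z hsqrt.ne'] at hclose
  linarith [abs_sub_abs_le_abs_sub (g z) (f ε (z * Real.sqrt ε)),
    abs_sub_comm (g z) (f ε (z * Real.sqrt ε))]

theorem boundary_layer_effect_general (cε : ℝ → ℝ → ℝ → ℝ → ℝ) (c0 cB : ℝ → ℝ → ℝ → ℝ)
    (C ε₀ : ℝ) (hε₀ : 0 < ε₀) (x₀ t₀ : ℝ)
    (hexp : ∀ ε : ℝ, 0 < ε → ε < ε₀ → ∀ x y t : ℝ, 0 < y →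
      |deriv (fun y' => cε ε x y' t) y - deriv (fun y' => c0 x y' t) y
        - deriv (fun z' => cB x z' t) (y / Real.sqrt ε)| ≤ C * ε ^ ((1:ℝ)/8))
    (hcont : Continuous fun z => deriv (fun z' => cB x₀ z' t₀) z) :
    ∀ δ : ℝ, 0 < δ → ∃ ε₁ : ℝ, 0 < ε₁ ∧ ∀ ε : ℝ, 0 < ε → ε < ε₁ →
      ∃ x y : ℝ, 0 < y ∧
        |deriv (fun y' => cε ε x y' t₀) y - deriv (fun y' => c0 x y' t₀) y| >
          |deriv (fun z' => cB x₀ z' t₀) 0| - δ := by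
  intro δ hδ
  have happrox : ∀ᶠ ε in 𝓝[>] 0, ∀ y, 0 < y →
      |deriv (fun y' => cε ε x₀ y' t₀) y - deriv (fun y' => c0 x₀ y' t₀) y
        - deriv (fun z' => cB x₀ z' t₀) (y / Real.sqrt ε)| ≤ C * ε ^ ((1:ℝ)/8) := by
    filter_upwards [Ioo_mem_nhdsGT hε₀] with ε hε
    exact fun y hy => hexp ε hε.1 hε.2 x₀ y t₀ hy
  obtain ⟨ε₁, hε₁, hbound⟩ := (nhdsGT_basis 0).eventually_iff.mp <|
    eventually_exists_abs_gt_of_approx_rescaled hcont.continuousWithinAt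
      (tendsto_const_mul_rpow_nhdsGT_zero C (by norm_num)) happrox hδ
  exact ⟨ε₁, hε₁, fun ε hε hεε₁ => ⟨x₀, hbound ⟨hε, hεε₁⟩⟩⟩

/-- Boundary layer effect: if the validated expansion
`‖∂_y c_ε − ∂_y c₀ − ∂_z c^B(·, ·/√ε, ·)‖_{L∞} ≤ C ε^{1/8}` holds with a
boundary-layer profile whose `z`-derivative is nonzero at `z = 0` (and decays as
`z → ∞`), then `‖∂_y c_ε − ∂_y c₀‖_{L∞}` does not tend to `0`: its liminf as
`ε → 0` is at least `|∂_z c^B(x₀,0,t₀)|`. -/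
theorem boundary_layer_effect (cε : ℝ → ℝ → ℝ → ℝ → ℝ) (c0 cB : ℝ → ℝ → ℝ → ℝ)
    (C ε₀ : ℝ) (hC : 0 ≤ C) (hε₀ : 0 < ε₀) (x₀ t₀ : ℝ)
    (hexp : ∀ ε : ℝ, 0 < ε → ε < ε₀ → ∀ x y t : ℝ, 0 < y →
      |deriv (fun y' => cε ε x y' t) y - deriv (fun y' => c0 x y' t) y
        - deriv (fun z' => cB x z' t) (y / Real.sqrt ε)| ≤ C * ε ^ ((1:ℝ)/8))
    (hcont : Continuous fun z => deriv (fun z' => cB x₀ z' t₀) z)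
    (hne : deriv (fun z' => cB x₀ z' t₀) 0 ≠ 0)
    (hdec : Tendsto (fun z => deriv (fun z' => cB x₀ z' t₀) z) atTop (nhds 0)) :
    ∀ δ : ℝ, 0 < δ → ∃ ε₁ : ℝ, 0 < ε₁ ∧ ∀ ε : ℝ, 0 < ε → ε < ε₁ →
      ∃ x y : ℝ, 0 < y ∧
        |deriv (fun y' => cε ε x y' t₀) y - deriv (fun y' => c0 x y' t₀) y| >
          |deriv (fun z' => cB x₀ z' t₀) 0| - δ :=
  boundary_layer_effect_general cε c0 cB C ε₀ hε₀ x₀ t₀ hexp hcont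
end
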